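/- arXiv:1302.1999 — 2 statements merged into one kernel-verified Lean document; each statement's English description precedes it below -/
import Mathlib

section
/- Under the assumptions on F, for all integers k, l ≥ 0 the function a_l^k(z) is a polynomial in z of degree at most k. -/
open scoped BigOperators

noncomputable section

/-- Polynomials in `z` (outer variable) with coefficients polynomials in `y` (inner variable);
this is the ring in which the coefficients `P^(k)(z,y)` live. -/
abbrev Bzy : Type := Polynomial (Polynomial ℂ)

/-- The variable `y` as an element of `Bzy` (the outer variable `Polynomial.X` is `z`). -/
def yB : Bzy := Polynomial.C Polynomial.X

/-- A complex constant as an element of `Bzy`. -/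
def cB (c : ℂ) : Bzy := Polynomial.C (Polynomial.C c)

/-- The power series `u = z + q (y - z)` in the variable `q`, with coefficients in `Bzy`. -/
def useries : PowerSeries Bzy :=
  PowerSeries.C (R := Bzy) Polynomial.X + PowerSeries.X * PowerSeries.C (R := Bzy) (yB - Polynomial.X)

/-- The inclusion of complex constants into `Bzy[[q]]`. -/
def constHom : ℂ →+* PowerSeries Bzy :=
  (PowerSeries.C (R := Bzy)).comp
    ((Polynomial.C : Polynomial ℂ →+* Bzy).comp (Polynomial.C : ℂ →+* Polynomial ℂ))

/-- Substitution of `u = z + q(y-z)` for the variable in a polynomial in `y`. -/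
def substY : Polynomial ℂ →+* PowerSeries Bzy :=
  Polynomial.eval₂RingHom constHom useries

/-- Substitution `z ↦ z`, `y ↦ u = z + q(y-z)` in a polynomial in `z` and `y`. -/
def substZY : Bzy →+* PowerSeries Bzy :=
  Polynomial.eval₂RingHom substY (PowerSeries.C (R := Bzy) Polynomial.X)

/-- The formal functional equation `z·F(z,y) = (1-ρ+ρu)·[(z-1)·F(0,u) + F(z,u)]`, where
`F = Σ_k q^k P^(k)(z,y)`, `F(0,u)` is obtained by setting `z = 0` (i.e. taking the coefficient
of `z^0`) and substituting `u` for `y`, and `F(z,u)` by substituting `u` for `y`; the `m`-th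
coefficient of `F(z,u)` is `Σ_{k ≤ m} [q^(m-k)] (P^(k)(z, z + q(y-z)))`, and similarly
for `F(0,u)`. -/
def FuncEq (ρ : ℝ) (P : ℕ → Bzy) : Prop :=
  PowerSeries.C (R := Bzy) Polynomial.X * PowerSeries.mk (fun k => P k) =
    (constHom (1 - (ρ : ℂ)) + constHom (ρ : ℂ) * useries) *
      (PowerSeries.C (R := Bzy) (Polynomial.X - 1) *
          PowerSeries.mk (fun m => ∑ k ∈ Finset.range (m + 1),
            PowerSeries.coeff (R := Bzy) (m - k) (substY ((P k).coeff 0))) +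
        PowerSeries.mk (fun m => ∑ k ∈ Finset.range (m + 1),
          PowerSeries.coeff (R := Bzy) (m - k) (substZY (P k))))

/-- `P^(0)(z,y)` does not depend on `y`. -/
def IndepY (P : ℕ → Bzy) : Prop := ∀ n : ℕ, ∃ c : ℂ, (P 0).coeff n = Polynomial.C c

/-- Boundary conditions: `P^(0)(0,1) = 1 - ρ` and `P^(k)(0,1) = 0` for all `k ≥ 1`. -/
def Boundary (ρ : ℝ) (P : ℕ → Bzy) : Prop :=
  ((P 0).coeff 0).eval 1 = 1 - (ρ : ℂ) ∧ ∀ k : ℕ, 1 ≤ k → ((P k).coeff 0).eval 1 = 0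

/-- Derivative with respect to the inner variable `y`. -/
def dy (p : Bzy) : Bzy :=
  p.sum fun n a => Polynomial.C (Polynomial.derivative a) * Polynomial.X ^ n

/-- The polynomial `P^(k)(0,y) + (P^(k)(z,y) - P^(k)(0,y))/z`, where the quotient is exact
polynomial division by the monic polynomial `z`. -/
def bracket (P : ℕ → Bzy) (k : ℕ) : Bzy :=
  Polynomial.C ((P k).coeff 0) + (P k - Polynomial.C ((P k).coeff 0)) /ₘ Polynomial.X

/-- `a_j^k(z) = ∂_y^j [P^(k)(0,y) + (P^(k)(z,y) - P^(k)(0,y))/z] |_{y=z}`, a polynomial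
in the single variable `z`. -/
def aCoef (P : ℕ → Bzy) (j k : ℕ) : Polynomial ℂ :=
  Polynomial.eval₂ (RingHom.id (Polynomial ℂ)) Polynomial.X ((dy^[j]) (bracket P k))

/-- Reinterpret a polynomial in the single variable `z` as an element of `Bzy`. -/
def embZ : Polynomial ℂ →+* Bzy := Polynomial.mapRingHom (Polynomial.C : ℂ →+* Polynomial ℂ)

/-- `A_j^k(z) = jρ a_{j-1}^{k-j}(z) + (1+ρ(z-1)) a_j^{k-j}(z)` for `1 ≤ j ≤ k`,
`A_0^0(z) = 1 + ρ(z-1)`, and `A_j^k(z) = 0` otherwise. -/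
def Acoef (ρ : ℝ) (P : ℕ → Bzy) (j k : ℕ) : Polynomial ℂ :=
  if 1 ≤ j ∧ j ≤ k then
    (j : Polynomial ℂ) * Polynomial.C (ρ : ℂ) * aCoef P (j - 1) (k - j) +
      (1 + Polynomial.C (ρ : ℂ) * (Polynomial.X - 1)) * aCoef P j (k - j)
  else if j = 0 ∧ k = 0 then 1 + Polynomial.C (ρ : ℂ) * (Polynomial.X - 1)
  else 0

end

/-!
Put `B = Σ_k q^k B^(k)` with `B^(k) = P^(k)(0,y) + (P^(k)(z,y) - P^(k)(0,y))/z`. Since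
`z B^(k) = P^(k) + (z-1) P^(k)(0,y)`, the functional equation says `F = (α + q β) B(z,u)` with
`α = 1-ρ+ρz` and `β = ρ(y-z)`, and Taylor's formula at `y = z` gives
`[q^j] B^(k)(z,u) = (y-z)^j a_j^k(z) / j!`. Hence `P^(m) = α g_m + β g_(m-1)` with
`g_m = Σ_k (y-z)^(m-k) a_(m-k)^k / (m-k)!`.

Reading off degrees, `P^(m)` has `y`-degree at most `m`. On the diagonal `y = z` the relation
reads `P^(m)(z,z) = α a_0^m`, and together with `z B^(m) = P^(m) + (z-1) P^(m)(0,y)` this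
gives `(1-ρ) a_0^m(z) = P^(m)(0,z)`, so `deg a_0^m ≤ m`. By strong induction on `m`: if
`deg a_j^k ≤ k` for all `k < m`, then `P^(m)` has total degree at most `m+1`, so `B^(m)` has total
degree at most `m`, and neither differentiating in `y` nor restricting to `y = z` raises the
total degree.
-/

open Polynomial

theorem Polynomial.hasseDeriv_map {R S : Type*} [Semiring R] [Semiring S] (f : R →+* S)
    (p : R[X]) (k : ℕ) : hasseDeriv k (p.map f) = (hasseDeriv k p).map f := by
  ext n
  simp [hasseDeriv_coeff]

theorem Polynomial.hasseDeriv_eq_C_inv_mul_iterate_derivative {R : Type*} [Field R] [CharZero R]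
    (p : R[X]) (k : ℕ) : hasseDeriv k p = C (k.factorial : R)⁻¹ * derivative^[k] p := by
  rw [← factorial_smul_hasseDeriv, LinearMap.smul_apply, nsmul_eq_mul, ← mul_assoc,
    ← C_eq_natCast, ← C_mul, inv_mul_cancel₀ (Nat.cast_ne_zero.mpr k.factorial_ne_zero), C_1,
    one_mul]

namespace PowerSeries

variable {R S : Type*} [CommSemiring R] [CommSemiring S]

theorem rescale_comp_C (b : R) : (rescale b).comp C = C (R := R) := by
  ext c n
  rcases n with _ | n <;> simp [coeff_rescale, coeff_C]

theorem coeff_eval₂_C_add_X_mul_C (f : R →+* S) (p : R[X]) (a b : S) (j : ℕ) :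
    coeff j (p.eval₂ (C.comp f) (C a + X * C b)) = (hasseDeriv j p).eval₂ f a * b ^ j := by
  -- `p(a + qb)` is `taylor a p` evaluated at `qb`, and `rescale b` supplies the factor `b ^ j`.
  have hresc : C a + X * C b = rescale b ↑(Polynomial.X + Polynomial.C a : S[X]) := by
    ext n
    rcases n with _ | _ | n <;> simp [coeff_rescale, coeff_X, coeff_C, -coeff_zero_eq_constantCoeff]
  have htaylor : p.eval₂ (C.comp f) ↑(Polynomial.X + Polynomial.C a : S[X]) =
      ↑(taylor a (p.map f)) := by
    rw [taylor_apply, comp, ← coeToPowerSeries.ringHom_apply (φ := Polynomial.eval₂ _ _ _),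
      Polynomial.hom_eval₂, eval₂_map, coeToPowerSeries.ringHom_apply]
    congr 1
    ext c : 1
    simp
  rw [hresc, ← rescale_comp_C b, RingHom.comp_assoc, ← Polynomial.hom_eval₂, htaylor,
    coeff_rescale, Polynomial.coeff_coe, taylor_coeff, hasseDeriv_map, eval_map, mul_comm]

end PowerSeries

theorem coeff_dy (p : Bzy) (i : ℕ) : (dy p).coeff i = derivative (p.coeff i) := by
  classical
  simp only [dy, Polynomial.sum, finsetSum_coeff, C_mul_X_pow_eq_monomial, coeff_monomial,
    Finset.sum_ite_eq', mem_support_iff]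
  split_ifs with h
  · rfl
  · rw [not_not.mp h, derivative_zero]

theorem coeff_iterate_dy (j : ℕ) (p : Bzy) (i : ℕ) :
    ((dy^[j]) p).coeff i = derivative^[j] (p.coeff i) := by
  induction j generalizing p with
  | zero => rfl
  | succ j ih => rw [Function.iterate_succ_apply, ih, coeff_dy, Function.iterate_succ_apply]

theorem iterate_dy_add (j : ℕ) (p q : Bzy) : (dy^[j]) (p + q) = (dy^[j]) p + (dy^[j]) q := by
  ext1 i
  simp only [coeff_iterate_dy, coeff_add, iterate_map_add]

theorem iterate_dy_monomial (j n : ℕ) (a : ℂ[X]) :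
    (dy^[j]) (monomial n a) = monomial n (derivative^[j] a) := by
  ext1 i
  simp only [coeff_iterate_dy, coeff_monomial]
  split_ifs
  · rfl
  · exact iterate_map_zero derivative j

theorem coeff_substY (a : ℂ[X]) (j : ℕ) :
    PowerSeries.coeff j (substY a) = embZ (hasseDeriv j a) * (yB - X) ^ j := by
  rw [substY, coe_eval₂RingHom, constHom, useries, PowerSeries.coeff_eval₂_C_add_X_mul_C]
  rfl

theorem coeff_substZY (p : Bzy) (j : ℕ) :
    PowerSeries.coeff j (substZY p) =
      cB (j.factorial : ℂ)⁻¹ * embZ (((dy^[j]) p).eval X) * (yB - X) ^ j := by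
  induction p using Polynomial.induction_on' with
  | add p q hp hq => rw [map_add, map_add, hp, hq, iterate_dy_add, eval_add, map_add]; ring
  | monomial n a =>
    rw [substZY, coe_eval₂RingHom, eval₂_monomial, ← map_pow, PowerSeries.coeff_mul_C,
      coeff_substY, iterate_dy_monomial, eval_monomial, hasseDeriv_eq_C_inv_mul_iterate_derivative,
      map_mul, map_mul, map_pow, embZ, coe_mapRingHom, map_X, map_C, cB]
    ring

/-- The outer variable has weight `v`, the inner one weight `1`. -/
def WeightedDegLE {R : Type*} [Semiring R] (v n : ℕ) (p : R[X][X]) : Prop :=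
  ∀ i, p.coeff i ≠ 0 → v * i + (p.coeff i).natDegree ≤ n

namespace WeightedDegLE

section Semiring

variable {R : Type*} [Semiring R] {v n m : ℕ} {p q : R[X][X]}

theorem mono (h : WeightedDegLE v n p) (hnm : n ≤ m) : WeightedDegLE v m p :=
  fun i hi => (h i hi).trans hnm

theorem natDegree_coeff_le (h : WeightedDegLE v n p) (i : ℕ) : (p.coeff i).natDegree ≤ n := by
  by_cases hi : p.coeff i = 0
  · simp [hi]
  · have := h i hi
    omega

theorem add (hp : WeightedDegLE v n p) (hq : WeightedDegLE v n q) : WeightedDegLE v n (p + q) := by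
  intro i hi
  rw [coeff_add] at hi ⊢
  by_cases hpi : p.coeff i = 0
  · rw [hpi, zero_add] at hi ⊢
    exact hq i hi
  by_cases hqi : q.coeff i = 0
  · rw [hqi, add_zero] at hi ⊢
    exact hp i hi
  have := natDegree_add_le (p.coeff i) (q.coeff i)
  have := hp i hpi
  have := hq i hqi
  omega

theorem sum {ι : Type*} {s : Finset ι} {f : ι → R[X][X]}
    (h : ∀ k ∈ s, WeightedDegLE v n (f k)) : WeightedDegLE v n (∑ k ∈ s, f k) := by
  classical
  induction s using Finset.induction_on with
  | empty => intro i hi; simp at hi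
  | insert a s ha ih =>
    rw [Finset.sum_insert ha]
    exact (h a (s.mem_insert_self a)).add (ih fun k hk => h k (Finset.mem_insert_of_mem hk))

theorem monomial {i : ℕ} {a : R[X]} (h : v * i + a.natDegree ≤ n) :
    WeightedDegLE v n (monomial i a) := by
  intro k hk
  rw [coeff_monomial] at hk ⊢
  split_ifs at hk ⊢ with hik
  · exact hik ▸ h
  · exact absurd rfl hk

theorem mul {a b : ℕ} (hp : WeightedDegLE v a p) (hq : WeightedDegLE v b q) :
    WeightedDegLE v (a + b) (p * q) := by
  rw [p.as_sum_support, q.as_sum_support, Finset.sum_mul_sum]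
  refine sum fun i hi => sum fun j hj => ?_
  rw [monomial_mul_monomial]
  refine monomial ?_
  have := natDegree_mul_le (p := p.coeff i) (q := q.coeff j)
  have := hp i (mem_support_iff.mp hi)
  have := hq j (mem_support_iff.mp hj)
  rw [mul_add]
  omega

theorem C (a : R[X]) : WeightedDegLE v a.natDegree (C a) := by
  simpa using monomial (v := v) (i := 0) (le_of_eq (zero_add _))

theorem pow {a : ℕ} (hp : WeightedDegLE v a p) (k : ℕ) : WeightedDegLE v (k * a) (p ^ k) := by
  induction k with
  | zero => simpa using C (v := v) (1 : R[X])
  | succ k ih => simpa [pow_succ, add_mul] using ih.mul hp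

theorem X : WeightedDegLE v v (X : R[X][X]) := by
  rw [← monomial_one_one_eq_X]
  exact monomial (by simp)

theorem map_C (a : R[X]) : WeightedDegLE v (v * a.natDegree) (a.map Polynomial.C) := by
  intro i hi
  rw [coeff_map, natDegree_C, add_zero]
  exact Nat.mul_le_mul_left v (le_natDegree_of_ne_zero fun h => hi (by simp [h]))

theorem of_X_mul (h : WeightedDegLE v (n + v) (Polynomial.X * p)) : WeightedDegLE v n p := by
  intro i hi
  have := h (i + 1) (by rwa [coeff_X_mul])
  rw [coeff_X_mul, mul_add] at this
  omega

theorem natDegree_eval_X_le (h : WeightedDegLE 1 n p) : (p.eval Polynomial.X).natDegree ≤ n := by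
  rw [eval_eq_sum, Polynomial.sum_def]
  refine natDegree_sum_le_of_forall_le _ _ fun i hi => ?_
  have := natDegree_mul_le (p := p.coeff i) (q := (Polynomial.X : R[X]) ^ i)
  have := h i (mem_support_iff.mp hi)
  have := natDegree_X_pow_le (R := R) i
  omega

end Semiring

theorem sub {R : Type*} [Ring R] {v n : ℕ} {p q : R[X][X]} (hp : WeightedDegLE v n p)
    (hq : WeightedDegLE v n q) : WeightedDegLE v n (p - q) := by
  rw [sub_eq_add_neg]
  refine hp.add fun i hi => ?_
  rw [coeff_neg, natDegree_neg]
  exact hq i (by simpa using hi)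

theorem iterate_dy {v n : ℕ} {p : Bzy} (h : WeightedDegLE v n p) (j : ℕ) :
    WeightedDegLE v n ((dy^[j]) p) := by
  intro i hi
  rw [coeff_iterate_dy] at hi ⊢
  have hpi : p.coeff i ≠ 0 := fun h0 => hi (by rw [h0, iterate_map_zero])
  have := natDegree_iterate_derivative (p.coeff i) j
  have := h i hpi
  omega

end WeightedDegLE

theorem X_mul_bracket (P : ℕ → Bzy) (k : ℕ) :
    X * bracket P k = P k + (X - 1) * C ((P k).coeff 0) := by
  have hdvd : X ∣ P k - C ((P k).coeff 0) := X_dvd_iff.mpr (by simp)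
  have h := modByMonic_add_div (P k - C ((P k).coeff 0)) X
  rw [(modByMonic_eq_zero_iff_dvd monic_X).mpr hdvd, zero_add] at h
  rw [bracket]
  linear_combination h

theorem substZY_X : substZY X = PowerSeries.C X := eval₂_X _ _

theorem substZY_C (a : ℂ[X]) : substZY (C a) = substY a := eval₂_C _ _

theorem aCoef_eq_eval (P : ℕ → Bzy) (j k : ℕ) :
    aCoef P j k = ((dy^[j]) (bracket P k)).eval X := rfl

theorem coeff_substZY_bracket (P : ℕ → Bzy) (j k : ℕ) :
    PowerSeries.coeff j (substZY (bracket P k)) =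
      cB (j.factorial : ℂ)⁻¹ * embZ (aCoef P j k) * (yB - X) ^ j :=
  coeff_substZY _ _

theorem weightedDegLE_cB (v : ℕ) (c : ℂ) : WeightedDegLE v 0 (cB c) := by
  rw [cB]
  simpa only [natDegree_C] using WeightedDegLE.C (v := v) (C c)

theorem weightedDegLE_yB_sub_X {v : ℕ} (hv : v ≤ 1) : WeightedDegLE v 1 (yB - X) := by
  rw [yB]
  refine .sub ?_ (WeightedDegLE.X.mono hv)
  simpa only [natDegree_X] using WeightedDegLE.C (v := v) (X : ℂ[X])

theorem eval_X_embZ (a : ℂ[X]) : (embZ a).eval X = a := by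
  rw [embZ, coe_mapRingHom, eval_map, eval₂_C_X]

theorem eval_X_yB_sub_X : (yB - X : Bzy).eval X = 0 := by
  rw [eval_sub, yB, eval_C, eval_X, sub_self]

theorem weightedDegLE_bracket {P : ℕ → Bzy} {m : ℕ} (hP : WeightedDegLE 1 (m + 1) (P m))
    (hc : ((P m).coeff 0).natDegree ≤ m) : WeightedDegLE 1 m (bracket P m) := by
  refine .of_X_mul ?_
  rw [X_mul_bracket]
  have hX1 : WeightedDegLE 1 1 (X - 1 : Bzy) := by
    refine WeightedDegLE.X.sub ?_
    rw [← C_1]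
    exact (WeightedDegLE.C _).mono (by simp)
  exact hP.add ((hX1.mul ((WeightedDegLE.C _).mono hc)).mono (by omega))

theorem natDegree_aCoef_le {P : ℕ → Bzy} {m : ℕ} (h : WeightedDegLE 1 m (bracket P m))
    (l : ℕ) : (aCoef P l m).natDegree ≤ m :=
  (h.iterate_dy l).natDegree_eval_X_le

namespace FuncEq

variable {ρ : ℝ} {P : ℕ → Bzy} {v m : ℕ}

noncomputable def alpha (ρ : ℝ) : Bzy := cB (1 - ρ) + cB ρ * X

noncomputable def beta (ρ : ℝ) : Bzy := cB ρ * (yB - X)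

/-- `[q^m] B(z,u)` for `B = Σ_k q^k bracket P k`, encoded as `F(z,u)` is in `FuncEq`. -/
noncomputable def bracketU (P : ℕ → Bzy) (m : ℕ) : Bzy :=
  ∑ k ∈ Finset.range (m + 1), PowerSeries.coeff (m - k) (substZY (bracket P k))

theorem one_sub_add_mul_useries (ρ : ℝ) :
    constHom (1 - ρ) + constHom ρ * useries =
      PowerSeries.C (alpha ρ) + PowerSeries.X * PowerSeries.C (beta ρ) := by
  simp only [constHom, useries, alpha, beta, cB, RingHom.coe_comp, Function.comp_apply, map_add,
    map_mul]
  ring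

/-- `(z-1) F(0,u) + F(z,u) = z B(z,u)`. -/
theorem X_sub_one_mul_add_eq_X_mul_bracketU (P : ℕ → Bzy) :
    PowerSeries.C (X - 1) *
        PowerSeries.mk (fun m => ∑ k ∈ Finset.range (m + 1),
          PowerSeries.coeff (m - k) (substY ((P k).coeff 0))) +
      PowerSeries.mk (fun m => ∑ k ∈ Finset.range (m + 1),
        PowerSeries.coeff (m - k) (substZY (P k))) =
    PowerSeries.C X * PowerSeries.mk (bracketU P) := by
  ext1 m
  simp only [map_add, PowerSeries.coeff_C_mul, PowerSeries.coeff_mk, bracketU, Finset.mul_sum,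
    ← Finset.sum_add_distrib]
  refine Finset.sum_congr rfl fun k _ => ?_
  have h : PowerSeries.C X * substZY (bracket P k) =
      substZY (P k) + PowerSeries.C (X - 1) * substY ((P k).coeff 0) := by
    rw [← substZY_X, ← substZY_C, ← map_mul, X_mul_bracket, map_add, map_mul, map_sub,
      map_sub, map_one, map_one, substZY_X]
  have hm := congrArg (PowerSeries.coeff (m - k)) h
  rw [PowerSeries.coeff_C_mul, map_add, PowerSeries.coeff_C_mul] at hm
  linear_combination -hm

theorem mk_eq_mul (hF : FuncEq ρ P) :
    PowerSeries.mk P = (PowerSeries.C (alpha ρ) + PowerSeries.X * PowerSeries.C (beta ρ)) *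
      PowerSeries.mk (bracketU P) := by
  rw [FuncEq, one_sub_add_mul_useries, X_sub_one_mul_add_eq_X_mul_bracketU, mul_left_comm] at hF
  exact mul_left_cancel₀ ((map_ne_zero_iff _ PowerSeries.C_injective).mpr X_ne_zero) hF

theorem coeff_zero (hF : FuncEq ρ P) : P 0 = alpha ρ * bracketU P 0 := by
  simpa using congrArg (PowerSeries.coeff 0) hF.mk_eq_mul

theorem coeff_succ (hF : FuncEq ρ P) (n : ℕ) :
    P (n + 1) = alpha ρ * bracketU P (n + 1) + beta ρ * bracketU P n := by
  simpa [add_mul, mul_assoc, PowerSeries.coeff_succ_X_mul] using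
    congrArg (PowerSeries.coeff (n + 1)) hF.mk_eq_mul

theorem weightedDegLE_alpha (ρ : ℝ) (v : ℕ) : WeightedDegLE v v (alpha ρ) :=
  ((weightedDegLE_cB v _).mono (Nat.zero_le v)).add (by simpa using (weightedDegLE_cB v _).mul .X)

theorem weightedDegLE_beta (ρ : ℝ) (hv : v ≤ 1) : WeightedDegLE v 1 (beta ρ) := by
  simpa only [beta, zero_add] using (weightedDegLE_cB v _).mul (weightedDegLE_yB_sub_X hv)

theorem weightedDegLE_bracketU (hv : v ≤ 1)
    (h : ∀ i k, i + k = m → v * (aCoef P i k).natDegree ≤ k) :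
    WeightedDegLE v m (bracketU P m) := by
  refine .sum fun k hk => ?_
  rw [coeff_substZY_bracket]
  have hk : k ≤ m := Finset.mem_range_succ_iff.mp hk
  have hterm : WeightedDegLE v _ (cB _ * embZ (aCoef P (m - k) k) * (yB - X) ^ (m - k)) :=
    ((weightedDegLE_cB v ((m - k).factorial : ℂ)⁻¹).mul (.map_C _)).mul
      ((weightedDegLE_yB_sub_X hv).pow (m - k))
  exact hterm.mono (by have := h (m - k) k (by omega); omega)

theorem weightedDegLE (hF : FuncEq ρ P) (hv : v ≤ 1)
    (h : ∀ i k, i + k ≤ m → v * (aCoef P i k).natDegree ≤ k) :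
    WeightedDegLE v (m + v) (P m) := by
  cases m with
  | zero =>
    rw [hF.coeff_zero]
    simpa [add_comm] using (weightedDegLE_alpha ρ v).mul
      (weightedDegLE_bracketU hv fun i k hik => h i k hik.le)
  | succ n =>
    rw [hF.coeff_succ]
    refine .add ((weightedDegLE_alpha ρ v).mul
      (weightedDegLE_bracketU hv fun i k hik => h i k hik.le) |>.mono (by omega)) ?_
    exact ((weightedDegLE_beta ρ hv).mul (weightedDegLE_bracketU hv fun i k hik =>
      h i k (by omega))).mono (by omega)

theorem eval_X_bracketU (P : ℕ → Bzy) (m : ℕ) : (bracketU P m).eval X = aCoef P 0 m := by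
  rw [bracketU, eval_finsetSum, Finset.sum_range_succ, Finset.sum_eq_zero, zero_add,
    coeff_substZY_bracket, Nat.sub_self]
  · simp [eval_X_embZ, cB]
  · intro k hk
    rw [coeff_substZY_bracket, eval_mul, eval_pow, eval_X_yB_sub_X,
      zero_pow (Nat.sub_ne_zero_of_lt (Finset.mem_range.mp hk)), mul_zero]

theorem eval_X_eq_mul_aCoef_zero (hF : FuncEq ρ P) (m : ℕ) :
    (P m).eval X = (C (1 - (ρ : ℂ)) + C (ρ : ℂ) * X) * aCoef P 0 m := by
  cases m with
  | zero => simp [hF.coeff_zero, alpha, cB, eval_X_bracketU]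
  | succ n => simp [hF.coeff_succ, alpha, beta, cB, yB, eval_X_bracketU]

theorem C_one_sub_mul_aCoef_zero (hF : FuncEq ρ P) (m : ℕ) :
    C (1 - (ρ : ℂ)) * aCoef P 0 m = (P m).coeff 0 := by
  have h : X * aCoef P 0 m = (P m).eval X + (X - 1) * (P m).coeff 0 := by
    simpa [aCoef_eq_eval] using congrArg (eval X) (X_mul_bracket P m)
  rw [hF.eval_X_eq_mul_aCoef_zero] at h
  have hX1 : (X - 1 : ℂ[X]) ≠ 0 := by simpa using X_sub_C_ne_zero (1 : ℂ)
  refine mul_left_cancel₀ hX1 ?_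
  rw [C_sub, C_1] at h ⊢
  linear_combination h

end FuncEq

theorem stmt15_general (ρ : ℝ) (hρ : ρ ∈ Set.Ioo (0 : ℝ) 1) (P : ℕ → Bzy)
    (hF : FuncEq ρ P) :
    ∀ k l : ℕ, (aCoef P l k).natDegree ≤ k := by
  have hρ1 : (1 : ℂ) - ρ ≠ 0 := sub_ne_zero.mpr (by exact_mod_cast hρ.2.ne')
  have hc : ∀ m, ((P m).coeff 0).natDegree ≤ m := fun m => by
    simpa using (hF.weightedDegLE (v := 0) zero_le_one (by simp)).natDegree_coeff_le 0
  have ha0 : ∀ m, (aCoef P 0 m).natDegree ≤ m := fun m => by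
    rw [← natDegree_C_mul hρ1, hF.C_one_sub_mul_aCoef_zero]
    exact hc m
  intro m
  induction m using Nat.strong_induction_on with
  | _ m ih =>
    refine natDegree_aCoef_le
      (weightedDegLE_bracket (hF.weightedDegLE le_rfl fun i k hik => ?_) (hc m))
    rw [one_mul]
    rcases (show k < m ∨ i = 0 ∧ k = m by omega) with hk | ⟨rfl, rfl⟩
    · exact ih k hk i
    · exact ha0 k

theorem stmt15 (ρ : ℝ) (hρ : ρ ∈ Set.Ioo (0 : ℝ) 1) (P : ℕ → Bzy)
    (hF : FuncEq ρ P) (hI : IndepY P) (hB : Boundary ρ P) :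
    ∀ k l : ℕ, (aCoef P l k).natDegree ≤ k :=
  stmt15_general ρ hρ P hF
end

section
/- In the ring of formal power series in q with coefficients in the polynomial ring ℤ[x], the infinite product ∏_{m=1}^{∞} (1 + x·q^m) equals Σ_{k≥0} (Σ_{j≥0} D(k,j)·x^j)·q^k; that is, for every k ≥ 0 the coefficient of q^k in the product is the polynomial Σ_{j≥0} D(k,j)·x^j. -/
/-- `D l j` is the number of sets of `j` pairwise distinct positive integers summing to `l`
(any such set is contained in `{1, ..., l}`); in particular `D 0 0 = 1` and `D l j = 0`
when no such set exists. -/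
def D (l j : ℕ) : ℕ :=
  (((Finset.range (l + 1)).powerset).filter
    (fun s => s.card = j ∧ s.sum id = l ∧ 0 ∉ s)).card

/-!
Expanding `∏_{m ∈ S} (1 + a q^m)` gives one term `a^{|t|} q^{∑ t}` for each subset `t ⊆ S`, so
the coefficient of `q^k` counts the sets of distinct parts from `S` summing to `k`, weighted by
`a` to the number of parts. For `S = {1, …, N}` with `k ≤ N` these are exactly all partitions of
`k` into distinct parts.
-/

open Finset

namespace PowerSeries

theorem coeff_prod_one_add_C_mul_X_pow {R : Type*} [CommSemiring R] (a : R) (S : Finset ℕ)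
    (k : ℕ) :
    coeff k (∏ m ∈ S, (1 + C a * X ^ m)) = ∑ t ∈ S.powerset with t.sum id = k, a ^ #t := by
  have hterm : ∀ t : Finset ℕ, ∏ m ∈ t, C a * X ^ m = C (a ^ #t) * X ^ t.sum id := by
    intro t
    rw [prod_mul_distrib, prod_const, prod_pow_eq_pow_sum, map_pow]
    rfl
  simp_rw [add_comm (1 : R⟦X⟧), prod_add, prod_const_one, mul_one, hterm, map_sum, coeff_C_mul,
    coeff_X_pow, mul_ite, mul_one, mul_zero, sum_filter, eq_comm]

end PowerSeries

namespace Finset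

theorem card_le_sum_id_of_zero_notMem {s : Finset ℕ} (h0 : 0 ∉ s) : #s ≤ s.sum id := by
  rw [card_eq_sum_ones]
  exact sum_le_sum fun i hi => Nat.one_le_iff_ne_zero.mpr fun hi0 => h0 (hi0 ▸ hi)

theorem subset_Icc_one_and_sum_id_eq_iff {s : Finset ℕ} {k N : ℕ} (hk : k ≤ N) :
    s ⊆ Icc 1 N ∧ s.sum id = k ↔ s ⊆ range (k + 1) ∧ s.sum id = k ∧ 0 ∉ s := by
  have hle : ∀ x ∈ s, x ≤ s.sum id := fun x hx => single_le_sum (f := id) (fun _ _ => Nat.zero_le _) hx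
  simp only [subset_iff, mem_Icc, mem_range]
  constructor
  · rintro ⟨hsub, rfl⟩
    exact ⟨fun x hx => Nat.lt_succ_of_le (hle x hx), rfl, fun h0 => by simpa using hsub h0⟩
  · rintro ⟨hsub, rfl, h0⟩
    refine ⟨fun x hx => ⟨Nat.one_le_iff_ne_zero.mpr fun hx0 => h0 (hx0 ▸ hx), ?_⟩, rfl⟩
    exact (hle x hx).trans hk

theorem sum_pow_card_eq_sum_range {R : Type*} [CommSemiring R] (a : R) (F : Finset (Finset ℕ))
    {n : ℕ} (hF : ∀ s ∈ F, #s < n) :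
    ∑ s ∈ F, a ^ #s = ∑ j ∈ range n, #{s ∈ F | #s = j} • a ^ j := by
  rw [← sum_fiberwise_of_maps_to (g := card) fun s hs => mem_range.mpr (hF s hs)]
  refine sum_congr rfl fun j _ => ?_
  rw [← sum_const]
  exact sum_congr rfl fun s hs => by rw [(mem_filter.mp hs).2]

end Finset

theorem stmt19 : ∀ k N : ℕ, k ≤ N →
    PowerSeries.coeff (R := Polynomial ℤ) k
        (∏ m ∈ Finset.Icc 1 N,
          (1 + PowerSeries.C (R := Polynomial ℤ) Polynomial.X * PowerSeries.X ^ m)) =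
      ∑ j ∈ Finset.range (k + 1), Polynomial.C (D k j : ℤ) * Polynomial.X ^ j := by
  intro k N hk
  have hparts : {t ∈ (Icc 1 N).powerset | t.sum id = k} =
      {s ∈ (range (k + 1)).powerset | s.sum id = k ∧ 0 ∉ s} := by
    ext s
    simpa only [mem_filter, mem_powerset, and_assoc] using subset_Icc_one_and_sum_id_eq_iff hk
  have hcard : ∀ s ∈ {s ∈ (range (k + 1)).powerset | s.sum id = k ∧ 0 ∉ s}, #s < k + 1 := by
    intro s hs
    obtain ⟨-, hsum, h0⟩ := mem_filter.mp hs
    exact Nat.lt_succ_of_le (hsum ▸ card_le_sum_id_of_zero_notMem h0)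
  rw [PowerSeries.coeff_prod_one_add_C_mul_X_pow, hparts, sum_pow_card_eq_sum_range _ _ hcard]
  refine sum_congr rfl fun j _ => ?_
  rw [filter_filter, D, nsmul_eq_mul, Polynomial.C_eq_natCast]
  congr 4
  ext s
  tauto
end
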